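/- arXiv:2601.07326 — 4 statements merged into one kernel-verified Lean document; each statement's English description precedes it below -/
import Mathlib

section
/- For symmetric positive semidefinite matrices X, Y ∈ R^{m×m}, tr((X+Y)^{1/2}) ≤ tr(X^{1/2}) + tr(Y^{1/2}). -/
/-! For positive definite `T`, expanding `0 ≤ tr ((√Z - T) T⁻¹ (√Z - T))` gives the matrix AM-GM
bound `2 tr √Z ≤ tr (T⁻¹ Z) + tr T`, with equality at `T = √Z`. Apply it to `Z = X + Y` and
`T = √X + √Y + ε`. Since `√X ≤ T`, the block matrix `!![√X, √X; √X, T]` is positive, and its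
Schur complement gives `√X T⁻¹ √X ≤ √X`, hence `tr (T⁻¹ X) ≤ tr √X`; likewise for `Y`. So
`2 tr √(X + Y) ≤ 2 (tr √X + tr √Y) + ε m`, and `ε → 0`. -/

open Matrix BigOperators

noncomputable section

namespace Paper

/-- Matrix real power of a symmetric matrix via spectral decomposition
(junk value `0` if the matrix is not hermitian). -/
def mrpow {m : ℕ} (X : Matrix (Fin m) (Fin m) ℝ) (t : ℝ) : Matrix (Fin m) (Fin m) ℝ :=
  if h : X.IsHermitian then
    (Matrix.IsHermitian.eigenvectorUnitary h : Matrix (Fin m) (Fin m) ℝ) *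
      Matrix.diagonal (fun i => (h.eigenvalues i) ^ t) *
      star (Matrix.IsHermitian.eigenvectorUnitary h : Matrix (Fin m) (Fin m) ℝ)
  else 0

/-- Singular values of a rectangular real matrix, as the square roots of the
eigenvalues of `Aᴴ * A` (listed with multiplicity, indexed by `Fin n`). -/
def singVals {m n : ℕ} (A : Matrix (Fin m) (Fin n) ℝ) : Fin n → ℝ :=
  fun i => Real.sqrt ((Matrix.isHermitian_conjTranspose_mul_self A).eigenvalues i)

/-- Nuclear norm: sum of singular values. -/
def nuclearNorm {m n : ℕ} (A : Matrix (Fin m) (Fin n) ℝ) : ℝ :=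
  ∑ i, singVals A i

/-- Frobenius norm. -/
def frobNorm {m n : ℕ} (A : Matrix (Fin m) (Fin n) ℝ) : ℝ :=
  Real.sqrt ((Aᴴ * A).trace)

/-- Spectral norm: largest singular value. -/
def opNorm {m n : ℕ} (A : Matrix (Fin m) (Fin n) ℝ) : ℝ :=
  ⨆ i, singVals A i

/-- Schatten-`p` norm for finite `p`. -/
def schattenNorm {m n : ℕ} (p : ℝ) (A : Matrix (Fin m) (Fin n) ℝ) : ℝ :=
  (∑ i, (singVals A i) ^ p) ^ (1 / p)

end Paper

open scoped MatrixOrder ComplexOrder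

namespace Matrix.PosSemidef

variable {n 𝕜 : Type*} [Fintype n] [DecidableEq n] [RCLike 𝕜]

theorem mul_inv_mul_le_self {A T : Matrix n n 𝕜} (hA : A.PosSemidef) (hT : T.PosDef)
    (hAT : A ≤ T) : A * T⁻¹ * A ≤ A := by
  obtain ⟨C, rfl⟩ := CStarAlgebra.nonneg_iff_eq_star_mul_self.mp hA.nonneg
  obtain ⟨D, hD⟩ := CStarAlgebra.nonneg_iff_eq_star_mul_self.mp (sub_nonneg.mpr hAT)
  have := hT.isUnit.invertible
  have hblocks : fromBlocks (star C * C) (star C * C) (star C * C)ᴴ T =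
      (fromBlocks C C 0 D)ᴴ * fromBlocks C C 0 D := by
    rw [← sub_add_cancel T (star C * C), hD]
    simp [fromBlocks_conjTranspose, fromBlocks_multiply, star_eq_conjTranspose, add_comm]
  have hschur := (hT.fromBlocks₂₂ (star C * C) (star C * C)).mp
    (hblocks ▸ posSemidef_conjTranspose_mul_self _)
  rwa [hA.1.eq] at hschur

theorem trace_inv_mul_le_trace_sqrt {Z T : Matrix n n 𝕜} (hZ : Z.PosSemidef) (hT : T.PosDef)
    (h : CFC.sqrt Z ≤ T) : (T⁻¹ * Z).trace ≤ (CFC.sqrt Z).trace := by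
  set S := CFC.sqrt Z
  calc (T⁻¹ * Z).trace = (S * T⁻¹ * S).trace := by
        rw [← CFC.sqrt_mul_sqrt_self Z hZ.nonneg, ← Matrix.mul_assoc, trace_mul_cycle]
    _ ≤ S.trace := (tracePositiveLinearMap n ℝ 𝕜).monotone'
        ((CFC.sqrt_nonneg Z).posSemidef.mul_inv_mul_le_self hT h)

theorem two_mul_trace_sqrt_le {Z T : Matrix n n 𝕜} (hZ : Z.PosSemidef) (hT : T.PosDef) :
    2 * (CFC.sqrt Z).trace ≤ (T⁻¹ * Z).trace + T.trace := by
  set S := CFC.sqrt Z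
  have hS : S.IsHermitian := (CFC.sqrt_nonneg Z).posSemidef.1
  have hSS : S * S = Z := CFC.sqrt_mul_sqrt_self Z hZ.nonneg
  have hdet : IsUnit T.det := (isUnit_iff_isUnit_det T).mp hT.isUnit
  have hexpand : (S - T)ᴴ * T⁻¹ * (S - T) =
      S * T⁻¹ * S - S * (T⁻¹ * T) - T * T⁻¹ * S + T * T⁻¹ * T := by
    rw [conjTranspose_sub, hS.eq, hT.1.eq]
    noncomm_ring
  have h0 := (hT.posSemidef.inv.conjTranspose_mul_mul_same (S - T)).trace_nonneg
  rw [hexpand, mul_nonsing_inv T hdet, nonsing_inv_mul T hdet] at h0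
  simp only [trace_add, trace_sub, one_mul, mul_one] at h0
  rw [trace_mul_cycle, hSS, trace_mul_comm] at h0
  rw [← sub_nonneg]
  convert h0 using 1
  ring

theorem trace_sqrt_add_le {X Y : Matrix n n ℝ} (hX : X.PosSemidef) (hY : Y.PosSemidef) :
    (CFC.sqrt (X + Y)).trace ≤ (CFC.sqrt X).trace + (CFC.sqrt Y).trace := by
  set A := CFC.sqrt X
  set B := CFC.sqrt Y
  have hA : A.PosSemidef := (CFC.sqrt_nonneg X).posSemidef
  have hB : B.PosSemidef := (CFC.sqrt_nonneg Y).posSemidef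
  have hbound : ∀ ε > 0, 2 * (CFC.sqrt (X + Y)).trace ≤
      2 * (A.trace + B.trace) + ε * Fintype.card n := by
    intro ε hε
    have hε1 : (ε • (1 : Matrix n n ℝ)).PosDef := PosDef.one.smul hε
    obtain ⟨T, hT_def⟩ : ∃ T, T = A + B + ε • (1 : Matrix n n ℝ) := ⟨_, rfl⟩
    have hT : T.PosDef := hT_def ▸ PosDef.posSemidef_add (hA.add hB) hε1
    have hAT : A ≤ T := by
      rw [hT_def, add_assoc]
      exact le_add_of_nonneg_right (hB.add hε1.posSemidef).nonneg
    have hBT : B ≤ T := by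
      rw [hT_def, add_comm A, add_assoc]
      exact le_add_of_nonneg_right (hA.add hε1.posSemidef).nonneg
    have hamgm := (hX.add hY).two_mul_trace_sqrt_le hT
    have hXT := hX.trace_inv_mul_le_trace_sqrt hT hAT
    have hYT := hY.trace_inv_mul_le_trace_sqrt hT hBT
    have htrT : T.trace = A.trace + B.trace + ε * Fintype.card n := by
      simp [hT_def, trace_add, trace_smul]
    rw [Matrix.mul_add, trace_add, htrT] at hamgm
    linarith
  refine le_of_forall_sub_le fun δ hδ => ?_
  have hδ' := hbound (δ / (Fintype.card n + 1)) (by positivity)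
  have hsmall : δ / (Fintype.card n + 1) * Fintype.card n ≤ δ := by
    rw [div_mul_eq_mul_div, div_le_iff₀ (by positivity)]
    nlinarith
  linarith

end Matrix.PosSemidef

namespace Paper

theorem mrpow_eq_cfc {m : ℕ} {X : Matrix (Fin m) (Fin m) ℝ} (hX : X.IsHermitian) (t : ℝ) :
    mrpow X t = cfc (fun x : ℝ => x ^ t) X := by
  rw [hX.cfc_eq, mrpow, dif_pos hX, IsHermitian.cfc, Unitary.conjStarAlgAut_apply]
  rfl

theorem mrpow_one_half {m : ℕ} {X : Matrix (Fin m) (Fin m) ℝ} (hX : X.PosSemidef) :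
    mrpow X (1 / 2) = CFC.sqrt X := by
  rw [mrpow_eq_cfc hX.1, CFC.sqrt_eq_real_sqrt X hX.nonneg, cfcₙ_eq_cfc]
  congr 1
  funext x
  exact (Real.sqrt_eq_rpow x).symm

/-- Subadditivity of the trace of the matrix square root on PSD matrices. -/
theorem stmt1 {m : ℕ} {X Y : Matrix (Fin m) (Fin m) ℝ}
    (hX : X.PosSemidef) (hY : Y.PosSemidef) :
    (mrpow (X + Y) (1/2)).trace ≤ (mrpow X (1/2)).trace + (mrpow Y (1/2)).trace := by
  rw [mrpow_one_half (hX.add hY), mrpow_one_half hX, mrpow_one_half hY]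
  exact hX.trace_sqrt_add_le hY

end Paper
end
end

section
/- For an m×n matrix M and symmetric positive definite matrices L ∈ R^{m×m}, R ∈ R^{n×n}, and α ∈ [0,1], the spectral norm satisfies ‖L^α M R^{1−α}‖_op ≤ ‖LM‖_op^α · ‖MR‖_op^{1−α}. -/
open Matrix BigOperators

noncomputable section

namespace Paper

/-!
The largest singular value `opNorm A` is the ℓ²-operator norm of `A` viewed as a complex matrix.
Diagonalize `L = U diag(λ) Uᴴ` and `R = V diag(μ) Vᴴ` over `ℂ` and put `N = Uᴴ M V`; the spectral
norm is unitarily invariant, so it suffices to bound `F(z) = diag(λ^z) N diag(μ^(1-z))` at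
`z = α`. The matrix-valued function `F` is entire and bounded on the strip `0 ≤ re z ≤ 1`. On the
line `re z = 0` it equals `diag(λ^z) (N diag μ) diag(μ^(-z))` and on `re z = 1` it equals
`diag(λ^(z-1)) (diag λ N) diag(μ^(1-z))`, whose outer factors are unitary diagonals. So
`‖F‖ ≤ ‖MR‖` and `‖F‖ ≤ ‖LM‖` on the two lines, and Hadamard's three lines theorem interpolates.
-/

open scoped Matrix.Norms.L2Operator

section L2OpNorm

variable {𝕜 : Type*} [RCLike 𝕜] {l m n p : Type*} [Fintype l] [Fintype m] [Fintype n] [Fintype p]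
  [DecidableEq m] [DecidableEq n] [DecidableEq p]

lemma l2_opNorm_mul_mul_le (A : Matrix l m 𝕜) (B : Matrix m n 𝕜) (C : Matrix n p 𝕜) :
    ‖A * B * C‖ ≤ ‖A‖ * ‖B‖ * ‖C‖ :=
  (l2_opNorm_mul _ _).trans (mul_le_mul_of_nonneg_right (l2_opNorm_mul _ _) (norm_nonneg _))

lemma l2_opNorm_le_one_of_mem_unitaryGroup {U : Matrix n n 𝕜} (hU : U ∈ unitaryGroup n 𝕜) :
    ‖U‖ ≤ 1 := by
  have h : ‖U‖ * ‖U‖ ≤ 1 := by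
    rw [← l2_opNorm_conjTranspose_mul_self, ← star_eq_conjTranspose,
      Unitary.star_mul_self_of_mem hU, ← diagonal_one, l2_opNorm_diagonal]
    exact pi_norm_le_iff_of_nonneg zero_le_one |>.mpr fun _ => norm_one.le
  nlinarith [norm_nonneg U]

lemma l2_opNorm_unitary_mul {U : Matrix m m 𝕜} (hU : U ∈ unitaryGroup m 𝕜) (X : Matrix m n 𝕜) :
    ‖U * X‖ = ‖X‖ := by
  refine le_antisymm ?_ ?_
  · calc ‖U * X‖ ≤ ‖U‖ * ‖X‖ := l2_opNorm_mul U X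
      _ ≤ ‖X‖ := mul_le_of_le_one_left (norm_nonneg X) (l2_opNorm_le_one_of_mem_unitaryGroup hU)
  · calc ‖X‖ = ‖star U * (U * X)‖ := by
          rw [← Matrix.mul_assoc, Unitary.star_mul_self_of_mem hU, Matrix.one_mul]
      _ ≤ ‖star U‖ * ‖U * X‖ := l2_opNorm_mul _ _
      _ ≤ ‖U * X‖ := mul_le_of_le_one_left (norm_nonneg _)
          (l2_opNorm_le_one_of_mem_unitaryGroup (Unitary.star_mem hU))

lemma l2_opNorm_mul_unitary {U : Matrix n n 𝕜} (hU : U ∈ unitaryGroup n 𝕜) (X : Matrix m n 𝕜) :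
    ‖X * U‖ = ‖X‖ := by
  rw [← l2_opNorm_conjTranspose, conjTranspose_mul, ← star_eq_conjTranspose U,
    l2_opNorm_unitary_mul (Unitary.star_mem hU), l2_opNorm_conjTranspose]

lemma l2_opNorm_unitary_mul_mul_star {U : Matrix m m 𝕜} {V : Matrix n n 𝕜}
    (hU : U ∈ unitaryGroup m 𝕜) (hV : V ∈ unitaryGroup n 𝕜) (X : Matrix m n 𝕜) :
    ‖U * X * star V‖ = ‖X‖ := by
  rw [l2_opNorm_mul_unitary (Unitary.star_mem hV), l2_opNorm_unitary_mul hU]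

end L2OpNorm

section DiagonalCpow

lemma rpow_le_max_one {x r : ℝ} (hx : 0 < x) (hr0 : 0 ≤ r) (hr1 : r ≤ 1) : x ^ r ≤ max 1 x := by
  rcases le_total x 1 with h | h
  · exact (Real.rpow_le_one hx.le h hr0).trans (le_max_left _ _)
  · exact (Real.rpow_le_self_of_one_le h hr1).trans (le_max_right _ _)

variable {m n : Type*} [DecidableEq n] {d : n → ℝ}

lemma diagonal_ofReal_eq_diagonal_cpow_one :
    diagonal (fun i => (d i : ℂ)) = diagonal (fun i => (d i : ℂ) ^ (1 : ℂ)) := by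
  simp only [Complex.cpow_one]

variable [Fintype n]

lemma diagonal_cpow_mul_diagonal_cpow (hd : ∀ i, 0 < d i) (z w : ℂ) :
    diagonal (fun i => (d i : ℂ) ^ z) * diagonal (fun i => (d i : ℂ) ^ w) =
      diagonal (fun i => (d i : ℂ) ^ (z + w)) := by
  rw [diagonal_mul_diagonal]
  congr! 2 with i
  exact (Complex.cpow_add z w (Complex.ofReal_ne_zero.mpr (hd i).ne')).symm

variable [Fintype m] [DecidableEq m] {e : m → ℝ}

lemma l2_opNorm_diagonal_cpow_le (hd : ∀ i, 0 < d i) {z : ℂ} {C : ℝ} (hC : 0 ≤ C)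
    (h : ∀ i, d i ^ z.re ≤ C) : ‖diagonal (fun i => (d i : ℂ) ^ z)‖ ≤ C := by
  rw [l2_opNorm_diagonal, pi_norm_le_iff_of_nonneg hC]
  intro i
  rw [Complex.norm_cpow_eq_rpow_re_of_pos (hd i)]
  exact h i

lemma l2_opNorm_diagonal_cpow_le_one (hd : ∀ i, 0 < d i) {z : ℂ} (hz : z.re = 0) :
    ‖diagonal (fun i => (d i : ℂ) ^ z)‖ ≤ 1 :=
  l2_opNorm_diagonal_cpow_le hd zero_le_one fun i => by rw [hz, Real.rpow_zero]

lemma exists_l2_opNorm_diagonal_cpow_le (hd : ∀ i, 0 < d i) :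
    ∃ C, ∀ z : ℂ, 0 ≤ z.re → z.re ≤ 1 → ‖diagonal (fun i => (d i : ℂ) ^ z)‖ ≤ C := by
  obtain ⟨C, hC⟩ := Finite.bddAbove_range fun i => max 1 (d i)
  refine ⟨max 1 C, fun z h0 h1 => l2_opNorm_diagonal_cpow_le hd (by positivity) fun i => ?_⟩
  exact (rpow_le_max_one (hd i) h0 h1).trans ((hC ⟨i, rfl⟩).trans (le_max_right _ _))

def cpowSandwich (d : n → ℝ) (e : m → ℝ) (N : Matrix n m ℂ) (z : ℂ) : Matrix n m ℂ :=
  diagonal (fun i => (d i : ℂ) ^ z) * N * diagonal (fun j => (e j : ℂ) ^ (1 - z))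

lemma differentiable_cpowSandwich (hd : ∀ i, 0 < d i) (he : ∀ j, 0 < e j) (N : Matrix n m ℂ) :
    Differentiable ℂ (cpowSandwich d e N) := by
  have hsum : cpowSandwich d e N =
      fun z => ∑ i, ∑ j, ((d i : ℂ) ^ z * (e j : ℂ) ^ (1 - z)) • single i j (N i j) := by
    funext z
    conv_lhs => rw [matrix_eq_sum_single (cpowSandwich d e N z)]
    simp only [cpowSandwich, diagonal_mul, mul_diagonal, smul_single, smul_eq_mul]
    congr! 3 with i _ j _
    ring
  have hd' : ∀ i, (d i : ℂ) ≠ 0 := fun i => Complex.ofReal_ne_zero.mpr (hd i).ne'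
  have he' : ∀ j, (e j : ℂ) ≠ 0 := fun j => Complex.ofReal_ne_zero.mpr (he j).ne'
  rw [hsum]
  fun_prop (disch := simp [hd', he'])

open Complex.HadamardThreeLines in
lemma bddAbove_norm_cpowSandwich (hd : ∀ i, 0 < d i) (he : ∀ j, 0 < e j) (N : Matrix n m ℂ) :
    BddAbove ((norm ∘ cpowSandwich d e N) '' verticalClosedStrip 0 1) := by
  obtain ⟨C, hC⟩ := exists_l2_opNorm_diagonal_cpow_le hd
  obtain ⟨K, hK⟩ := exists_l2_opNorm_diagonal_cpow_le he
  refine ⟨C * ‖N‖ * K, ?_⟩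
  rintro _ ⟨z, ⟨hz0, hz1⟩, rfl⟩
  have hCz := hC z hz0 hz1
  have hC0 : 0 ≤ C := (norm_nonneg _).trans hCz
  have hKz : ‖diagonal (fun j => (e j : ℂ) ^ (1 - z))‖ ≤ K :=
    hK _ (by simp only [Complex.sub_re, Complex.one_re]; linarith)
      (by simp only [Complex.sub_re, Complex.one_re]; linarith)
  calc ‖cpowSandwich d e N z‖ ≤ ‖diagonal (fun i => (d i : ℂ) ^ z)‖ * ‖N‖ *
        ‖diagonal (fun j => (e j : ℂ) ^ (1 - z))‖ := l2_opNorm_mul_mul_le _ _ _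
    _ ≤ C * ‖N‖ * K := by gcongr

lemma l2_opNorm_cpowSandwich_le_of_re_eq_zero (hd : ∀ i, 0 < d i) (he : ∀ j, 0 < e j)
    (N : Matrix n m ℂ) {z : ℂ} (hz : z.re = 0) :
    ‖cpowSandwich d e N z‖ ≤ ‖N * diagonal (fun j => (e j : ℂ))‖ := by
  have hsplit : cpowSandwich d e N z = diagonal (fun i => (d i : ℂ) ^ z) *
      (N * diagonal (fun j => (e j : ℂ))) * diagonal (fun j => (e j : ℂ) ^ (-z)) := by
    rw [cpowSandwich, diagonal_ofReal_eq_diagonal_cpow_one, Matrix.mul_assoc _ (N * _),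
      Matrix.mul_assoc N, diagonal_cpow_mul_diagonal_cpow he, ← sub_eq_add_neg, Matrix.mul_assoc]
  calc ‖cpowSandwich d e N z‖
      ≤ ‖diagonal (fun i => (d i : ℂ) ^ z)‖ * ‖N * diagonal (fun j => (e j : ℂ))‖ *
          ‖diagonal (fun j => (e j : ℂ) ^ (-z))‖ := hsplit ▸ l2_opNorm_mul_mul_le _ _ _
    _ ≤ 1 * ‖N * diagonal (fun j => (e j : ℂ))‖ * 1 := by
        gcongr
        · exact l2_opNorm_diagonal_cpow_le_one hd hz
        · exact l2_opNorm_diagonal_cpow_le_one he (by simp [hz])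
    _ = ‖N * diagonal (fun j => (e j : ℂ))‖ := by ring

lemma l2_opNorm_cpowSandwich_le_of_re_eq_one (hd : ∀ i, 0 < d i) (he : ∀ j, 0 < e j)
    (N : Matrix n m ℂ) {z : ℂ} (hz : z.re = 1) :
    ‖cpowSandwich d e N z‖ ≤ ‖diagonal (fun i => (d i : ℂ)) * N‖ := by
  have hsplit : cpowSandwich d e N z = diagonal (fun i => (d i : ℂ) ^ (z - 1)) *
      (diagonal (fun i => (d i : ℂ)) * N) * diagonal (fun j => (e j : ℂ) ^ (1 - z)) := by
    rw [cpowSandwich, diagonal_ofReal_eq_diagonal_cpow_one, ← Matrix.mul_assoc,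
      diagonal_cpow_mul_diagonal_cpow hd, sub_add_cancel]
  calc ‖cpowSandwich d e N z‖
      ≤ ‖diagonal (fun i => (d i : ℂ) ^ (z - 1))‖ * ‖diagonal (fun i => (d i : ℂ)) * N‖ *
          ‖diagonal (fun j => (e j : ℂ) ^ (1 - z))‖ := hsplit ▸ l2_opNorm_mul_mul_le _ _ _
    _ ≤ 1 * ‖diagonal (fun i => (d i : ℂ)) * N‖ * 1 := by
        gcongr
        · exact l2_opNorm_diagonal_cpow_le_one hd (by simp [hz])
        · exact l2_opNorm_diagonal_cpow_le_one he (by simp [hz])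
    _ = ‖diagonal (fun i => (d i : ℂ)) * N‖ := by ring

open Complex.HadamardThreeLines in
theorem l2_opNorm_cpowSandwich_le (hd : ∀ i, 0 < d i) (he : ∀ j, 0 < e j) (N : Matrix n m ℂ)
    {α : ℝ} (hα0 : 0 ≤ α) (hα1 : α ≤ 1) :
    ‖cpowSandwich d e N α‖ ≤
      ‖diagonal (fun i => (d i : ℂ)) * N‖ ^ α * ‖N * diagonal (fun j => (e j : ℂ))‖ ^ (1 - α) := by
  have h := norm_le_interp_of_mem_verticalClosedStrip₀₁' (cpowSandwich d e N)
    (show (α : ℂ) ∈ verticalClosedStrip 0 1 from ⟨hα0, hα1⟩)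
    (differentiable_cpowSandwich hd he N).diffContOnCl (bddAbove_norm_cpowSandwich hd he N)
    (fun z hz => l2_opNorm_cpowSandwich_le_of_re_eq_zero hd he N hz)
    (fun z hz => l2_opNorm_cpowSandwich_le_of_re_eq_one hd he N hz)
  rwa [Complex.ofReal_re, mul_comm] at h

end DiagonalCpow

section OfReal

variable {l m n : Type*}

lemma map_ofReal_mul [Fintype m] (A : Matrix l m ℝ) (B : Matrix m n ℝ) :
    (A * B).map Complex.ofReal = A.map Complex.ofReal * B.map Complex.ofReal :=
  Matrix.map_mul (f := Complex.ofRealHom)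

lemma conjTranspose_map_ofReal (A : Matrix m n ℝ) :
    (A.map Complex.ofReal)ᴴ = Aᴴ.map Complex.ofReal :=
  (conjTranspose_map _ fun x => (Complex.conj_ofReal x).symm).symm

variable [Fintype n] [DecidableEq n]

lemma map_ofReal_mem_unitaryGroup {U : Matrix n n ℝ} (hU : U ∈ unitaryGroup n ℝ) :
    U.map Complex.ofReal ∈ unitaryGroup n ℂ := by
  rw [mem_unitaryGroup_iff, star_eq_conjTranspose, conjTranspose_map_ofReal, ← map_ofReal_mul,
    ← star_eq_conjTranspose, Unitary.mul_star_self_of_mem hU,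
    Matrix.map_one _ Complex.ofReal_zero Complex.ofReal_one]

lemma map_ofReal_mul_diagonal_mul_star (U : Matrix n n ℝ) (d : n → ℝ) :
    (U * diagonal d * star U).map Complex.ofReal =
      U.map Complex.ofReal * diagonal (fun i => (d i : ℂ)) * star (U.map Complex.ofReal) := by
  rw [map_ofReal_mul, map_ofReal_mul, diagonal_map Complex.ofReal_zero, star_eq_conjTranspose,
    star_eq_conjTranspose, conjTranspose_map_ofReal]

lemma norm_ofReal_pi_eq_iSup [Fintype l] {s : l → ℝ} (hs : ∀ i, 0 ≤ s i) :
    ‖fun i => (s i : ℂ)‖ = ⨆ i, s i := by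
  have hnorm : ∀ i, ‖(s i : ℂ)‖ = s i := fun i => by
    rw [Complex.norm_real, Real.norm_of_nonneg (hs i)]
  refine le_antisymm ((pi_norm_le_iff_of_nonneg (Real.iSup_nonneg hs)).mpr fun i => ?_)
    (Real.iSup_le (fun i => ?_) (norm_nonneg _))
  · rw [hnorm]
    exact le_ciSup (Finite.bddAbove_range s) i
  · simpa only [hnorm] using norm_le_pi_norm (fun i => (s i : ℂ)) i

end OfReal

lemma opNorm_eq_l2_opNorm_map_ofReal {m n : ℕ} (A : Matrix (Fin m) (Fin n) ℝ) :
    opNorm A = ‖A.map Complex.ofReal‖ := by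
  have hH := isHermitian_conjTranspose_mul_self A
  set W : Matrix (Fin n) (Fin n) ℂ :=
    (hH.eigenvectorUnitary : Matrix (Fin n) (Fin n) ℝ).map Complex.ofReal
  have hW : W ∈ unitaryGroup (Fin n) ℂ := map_ofReal_mem_unitaryGroup hH.eigenvectorUnitary.2
  set S : Matrix (Fin n) (Fin n) ℂ := diagonal fun i => (singVals A i : ℂ)
  -- `S * star W` is a square root of `Aᴴ * A`, so the C*-identity gives `‖A‖ = ‖S‖`.
  have hsq : (A.map Complex.ofReal)ᴴ * A.map Complex.ofReal = (S * star W)ᴴ * (S * star W) := by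
    have hspec := hH.spectral_theorem
    rw [Unitary.conjStarAlgAut_apply, RCLike.ofReal_real_eq_id, Function.id_comp] at hspec
    have hS : Sᴴ * S = diagonal fun i => (hH.eigenvalues i : ℂ) := by
      rw [diagonal_conjTranspose, diagonal_mul_diagonal]
      congr! 2 with i
      rw [Pi.star_apply, Complex.star_def, Complex.conj_ofReal, ← Complex.ofReal_mul, singVals,
        Real.mul_self_sqrt ((posSemidef_conjTranspose_mul_self A).eigenvalues_nonneg i)]
    rw [conjTranspose_map_ofReal, ← map_ofReal_mul, hspec, map_ofReal_mul_diagonal_mul_star, ← hS,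
      conjTranspose_mul, star_eq_conjTranspose W, conjTranspose_conjTranspose]
    simp only [Matrix.mul_assoc]
    rfl
  have h := congrArg norm hsq
  rw [l2_opNorm_conjTranspose_mul_self, l2_opNorm_conjTranspose_mul_self,
    l2_opNorm_mul_unitary (Unitary.star_mem hW), l2_opNorm_diagonal] at h
  rw [(mul_self_inj (norm_nonneg _) (norm_nonneg _)).mp h,
    norm_ofReal_pi_eq_iSup (s := singVals A) fun i => Real.sqrt_nonneg _, opNorm]

lemma exists_unitary_diagonalization_of_posDef {m : ℕ} {L : Matrix (Fin m) (Fin m) ℝ}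
    (hL : L.PosDef) :
    ∃ U ∈ unitaryGroup (Fin m) ℂ, ∃ lam : Fin m → ℝ, (∀ i, 0 < lam i) ∧
      L.map Complex.ofReal = U * diagonal (fun i => (lam i : ℂ)) * star U ∧
      ∀ t : ℝ, (mrpow L t).map Complex.ofReal =
        U * diagonal (fun i => (lam i : ℂ) ^ (t : ℂ)) * star U := by
  refine ⟨_, map_ofReal_mem_unitaryGroup hL.1.eigenvectorUnitary.2, hL.1.eigenvalues,
    hL.eigenvalues_pos, ?_, fun t => ?_⟩
  · conv_lhs => rw [hL.1.spectral_theorem, Unitary.conjStarAlgAut_apply, RCLike.ofReal_real_eq_id,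
      Function.id_comp]
    exact map_ofReal_mul_diagonal_mul_star _ _
  · rw [mrpow, dif_pos hL.1, map_ofReal_mul_diagonal_mul_star]
    congr 3 with i
    exact Complex.ofReal_cpow (hL.eigenvalues_pos i).le t

/-- Matrix Cauchy–Schwarz for the spectral norm:
`‖L^α M R^{1−α}‖_op ≤ ‖LM‖_op^α ‖MR‖_op^{1−α}`. -/
theorem stmt4 {m n : ℕ} (M : Matrix (Fin m) (Fin n) ℝ)
    {L : Matrix (Fin m) (Fin m) ℝ} {R : Matrix (Fin n) (Fin n) ℝ}
    (hL : L.PosDef) (hR : R.PosDef) {α : ℝ} (hα0 : 0 ≤ α) (hα1 : α ≤ 1) :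
    opNorm (mrpow L α * M * mrpow R (1 - α)) ≤
      opNorm (L * M) ^ α * opNorm (M * R) ^ (1 - α) := by
  obtain ⟨U, hU, lam, hlam, hLU, hLpow⟩ := exists_unitary_diagonalization_of_posDef hL
  obtain ⟨V, hV, mu, hmu, hRV, hRpow⟩ := exists_unitary_diagonalization_of_posDef hR
  set N := star U * M.map Complex.ofReal * V
  have hT : (mrpow L α * M * mrpow R (1 - α)).map Complex.ofReal =
      U * cpowSandwich lam mu N α * star V := by
    simp only [map_ofReal_mul, hLpow, hRpow, cpowSandwich, N, Matrix.mul_assoc,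
      Complex.ofReal_sub, Complex.ofReal_one]
  have hLM : (L * M).map Complex.ofReal = U * (diagonal (fun i => (lam i : ℂ)) * N) * star V := by
    simp only [map_ofReal_mul, hLU, N, Matrix.mul_assoc, Unitary.mul_star_self_of_mem hV,
      Matrix.mul_one]
  have hMR : (M * R).map Complex.ofReal = U * (N * diagonal (fun j => (mu j : ℂ))) * star V := by
    simp only [map_ofReal_mul, hRV, N, Matrix.mul_assoc]
    rw [← Matrix.mul_assoc U, Unitary.mul_star_self_of_mem hU, Matrix.one_mul]
  rw [opNorm_eq_l2_opNorm_map_ofReal, opNorm_eq_l2_opNorm_map_ofReal,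
    opNorm_eq_l2_opNorm_map_ofReal, hT, hLM, hMR, l2_opNorm_unitary_mul_mul_star hU hV,
    l2_opNorm_unitary_mul_mul_star hU hV, l2_opNorm_unitary_mul_mul_star hU hV]
  exact l2_opNorm_cpowSandwich_le hlam hmu N hα0 hα1

end Paper
end
end

section
/- Let θ, β satisfy 0 < θ ≤ β ≤ √θ < 1, and let G_1,...,G_k ∈ R^{m×n}. Define M_k = (1−θ) Σ_{t=1}^k θ^{k−t} G_t and L_k = (1−β) Σ_{t=1}^k β^{k−t} G_t G_tᵀ. Then for every y ∈ R^m, yᵀ M_k M_kᵀ y ≤ 4 yᵀ L_k y, and hence M_k M_kᵀ ⪯ 4 L_k. -/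
open Matrix BigOperators

noncomputable section

namespace Paper

/-!
With `u t = (G t)ᵀ y`, the quadratic form of `M * Mᵀ` is `‖∑ c t • u t‖²` and that of `Lk` is
`∑ d t * ‖u t‖²`, where `c t = (1 - θ) θ^(k-t)` and `d t = (1 - β) β^(k-t)`. Weighted
Cauchy–Schwarz gives `‖∑ c t • u t‖² ≤ (∑ c t² / d t) ∑ d t ‖u t‖²`, and `∑ c t² / d t` is a
geometric series with ratio `θ² / β ≤ β`, so it is at most `(1 - θ)² / (1 - β)² ≤ (1 + √θ)² ≤ 4`.
-/

section WeightedCauchySchwarz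

variable {ι m n : Type*} [Fintype m] [Fintype n]

theorem sq_sum_mul_le_sum_sq_div_mul_sum_mul_sq (s : Finset ι) (c d x : ι → ℝ)
    (hd : ∀ i ∈ s, 0 < d i) :
    (∑ i ∈ s, c i * x i) ^ 2 ≤ (∑ i ∈ s, c i ^ 2 / d i) * ∑ i ∈ s, d i * x i ^ 2 :=
  Finset.sum_sq_le_sum_mul_sum_of_sq_le_mul s
    (fun i hi => div_nonneg (sq_nonneg _) (hd i hi).le)
    (fun i hi => mul_nonneg (hd i hi).le (sq_nonneg _))
    (fun i hi => le_of_eq (by field_simp [(hd i hi).ne']))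

theorem dotProduct_mul_conjTranspose_mulVec (A : Matrix m n ℝ) (y : m → ℝ) :
    y ⬝ᵥ ((A * Aᴴ) *ᵥ y) = (Aᴴ *ᵥ y) ⬝ᵥ (Aᴴ *ᵥ y) := by
  rw [← mulVec_mulVec, dotProduct_mulVec, ← mulVec_transpose,
    conjTranspose_eq_transpose_of_trivial]

theorem dotProduct_sum_smul_mul_conjTranspose_mulVec_le (s : Finset ι) (c d : ι → ℝ)
    (hd : ∀ i ∈ s, 0 < d i) (A : ι → Matrix m n ℝ) (y : m → ℝ) :
    y ⬝ᵥ (((∑ i ∈ s, c i • A i) * (∑ i ∈ s, c i • A i)ᴴ) *ᵥ y) ≤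
      (∑ i ∈ s, c i ^ 2 / d i) * (y ⬝ᵥ ((∑ i ∈ s, d i • (A i * (A i)ᴴ)) *ᵥ y)) := by
  set u : ι → n → ℝ := fun i => (A i)ᴴ *ᵥ y
  have hB : (∑ i ∈ s, c i • A i)ᴴ *ᵥ y = ∑ i ∈ s, c i • u i := by
    simp only [conjTranspose_sum, conjTranspose_smul, star_trivial, sum_mulVec, smul_mulVec,
      u]
  have hL :
      y ⬝ᵥ ((∑ i ∈ s, d i • (A i * (A i)ᴴ)) *ᵥ y) = ∑ i ∈ s, d i * (u i ⬝ᵥ u i) := by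
    simp only [sum_mulVec, dotProduct_sum, smul_mulVec, dotProduct_smul, smul_eq_mul,
      dotProduct_mul_conjTranspose_mulVec, u]
  rw [dotProduct_mul_conjTranspose_mulVec, hB, hL]
  calc (∑ i ∈ s, c i • u i) ⬝ᵥ (∑ i ∈ s, c i • u i)
      = ∑ j, (∑ i ∈ s, c i * u i j) ^ 2 := by simp [dotProduct, sq]
    _ ≤ ∑ j, (∑ i ∈ s, c i ^ 2 / d i) * ∑ i ∈ s, d i * u i j ^ 2 :=
        Finset.sum_le_sum fun j _ => sq_sum_mul_le_sum_sq_div_mul_sum_mul_sq s c d _ hd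
    _ = (∑ i ∈ s, c i ^ 2 / d i) * ∑ i ∈ s, d i * (u i ⬝ᵥ u i) := by
        rw [← Finset.mul_sum, Finset.sum_comm]
        simp only [dotProduct, Finset.mul_sum, sq]

end WeightedCauchySchwarz

theorem sum_Icc_pow_sub_le {r : ℝ} (hr0 : 0 ≤ r) (hr1 : r < 1) (k : ℕ) :
    ∑ t ∈ Finset.Icc 1 k, r ^ (k - t) ≤ 1 / (1 - r) := by
  rw [← Finset.Ico_add_one_right_eq_Icc, Finset.sum_Ico_reflect _ _ le_rfl]
  simpa using geom_sum_Ico_le_of_lt_one (m := 0) (n := k) hr0 hr1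

theorem sum_Icc_momentum_weights_le_four {θ β : ℝ} (hθ : 0 < θ) (hθβ : θ ≤ β)
    (hβ : β ≤ Real.sqrt θ) (hβ1 : Real.sqrt θ < 1) (k : ℕ) :
    ∑ t ∈ Finset.Icc 1 k, ((1 - θ) * θ ^ (k - t)) ^ 2 / ((1 - β) * β ^ (k - t)) ≤ 4 := by
  have hβ0 : 0 < β := hθ.trans_le hθβ
  have hβ_lt_one : β < 1 := hβ.trans_lt hβ1
  have hθ_lt_one : θ < 1 := hθβ.trans_lt hβ_lt_one
  set r := θ ^ 2 / β
  have hr_le : r ≤ β := by rw [div_le_iff₀ hβ0]; nlinarith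
  have hratio : (1 - θ) / (1 - β) ≤ 2 := by
    rw [div_le_iff₀ (by linarith)]
    nlinarith [Real.sq_sqrt hθ.le, sq_nonneg (1 - Real.sqrt θ)]
  calc ∑ t ∈ Finset.Icc 1 k, ((1 - θ) * θ ^ (k - t)) ^ 2 / ((1 - β) * β ^ (k - t))
      = (1 - θ) ^ 2 / (1 - β) * ∑ t ∈ Finset.Icc 1 k, r ^ (k - t) := by
        rw [Finset.mul_sum]
        refine Finset.sum_congr rfl fun t _ => ?_
        rw [div_pow, ← pow_mul, pow_mul']
        field_simp
    _ ≤ (1 - θ) ^ 2 / (1 - β) * (1 / (1 - β)) := by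
        gcongr
        exact (sum_Icc_pow_sub_le (by positivity) (hr_le.trans_lt hβ_lt_one) k).trans
          (by gcongr)
    _ = ((1 - θ) / (1 - β)) ^ 2 := by ring
    _ ≤ 2 ^ 2 := by gcongr
    _ = 4 := by norm_num

theorem stmt9_general {m n : ℕ} {θ β : ℝ} (hθ : 0 < θ) (hθβ : θ ≤ β)
    (hβ : β ≤ Real.sqrt θ) (hβ1 : Real.sqrt θ < 1)
    (G : ℕ → Matrix (Fin m) (Fin n) ℝ) (k : ℕ)
    (M : Matrix (Fin m) (Fin n) ℝ) (Lk : Matrix (Fin m) (Fin m) ℝ)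
    (hM : M = (1 - θ) • ∑ t ∈ Finset.Icc 1 k, θ ^ (k - t) • G t)
    (hL : Lk = (1 - β) • ∑ t ∈ Finset.Icc 1 k, β ^ (k - t) • (G t * (G t)ᴴ)) :
    (∀ y : Fin m → ℝ, y ⬝ᵥ ((M * Mᴴ) *ᵥ y) ≤ 4 * (y ⬝ᵥ (Lk *ᵥ y))) ∧
      ((4 : ℝ) • Lk - M * Mᴴ).PosSemidef := by
  have hβ0 : 0 < β := hθ.trans_le hθβ
  have hβ_lt_one : β < 1 := hβ.trans_lt hβ1
  have hd : ∀ t ∈ Finset.Icc 1 k, 0 < (1 - β) * β ^ (k - t) := fun t _ =>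
    mul_pos (sub_pos.2 hβ_lt_one) (pow_pos hβ0 _)
  rw [Finset.smul_sum] at hM hL
  simp only [smul_smul] at hM hL
  have hLk : Lk.PosSemidef := hL ▸ posSemidef_sum _ fun t ht =>
    (posSemidef_self_mul_conjTranspose (G t)).smul (hd t ht).le
  have hquad : ∀ y, y ⬝ᵥ ((M * Mᴴ) *ᵥ y) ≤ 4 * (y ⬝ᵥ (Lk *ᵥ y)) := fun y => by
    have hy := hLk.dotProduct_mulVec_nonneg y
    rw [star_trivial] at hy
    subst hM hL
    exact (dotProduct_sum_smul_mul_conjTranspose_mulVec_le _ _ _ hd G y).trans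
      (mul_le_mul_of_nonneg_right (sum_Icc_momentum_weights_le_four hθ hθβ hβ hβ1 k) hy)
  have hherm : ((4 : ℝ) • Lk - M * Mᴴ).IsHermitian :=
    (hLk.smul (by norm_num : (0 : ℝ) ≤ 4)).isHermitian.sub
      (isHermitian_mul_conjTranspose_self M)
  refine ⟨hquad, posSemidef_iff_dotProduct_mulVec.mpr ⟨hherm, fun y => ?_⟩⟩
  rw [star_trivial, sub_mulVec, dotProduct_sub, smul_mulVec, dotProduct_smul, smul_eq_mul]
  linarith [hquad y]

/-- Momentum bound: `M_k M_kᵀ ⪯ 4 L_k` for the exponential moving averages. -/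
theorem stmt9 {m n : ℕ} {θ β : ℝ} (hθ : 0 < θ) (hθβ : θ ≤ β)
    (hβ : β ≤ Real.sqrt θ) (hβ1 : Real.sqrt θ < 1)
    (G : ℕ → Matrix (Fin m) (Fin n) ℝ) (k : ℕ) (hk : 1 ≤ k)
    (M : Matrix (Fin m) (Fin n) ℝ) (Lk : Matrix (Fin m) (Fin m) ℝ)
    (hM : M = (1 - θ) • ∑ t ∈ Finset.Icc 1 k, θ ^ (k - t) • G t)
    (hL : Lk = (1 - β) • ∑ t ∈ Finset.Icc 1 k, β ^ (k - t) • (G t * (G t)ᴴ)) :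
    (∀ y : Fin m → ℝ, y ⬝ᵥ ((M * Mᴴ) *ᵥ y) ≤ 4 * (y ⬝ᵥ (Lk *ᵥ y))) ∧
      ((4 : ℝ) • Lk - M * Mᴴ).PosSemidef :=
  stmt9_general hθ hθβ hβ hβ1 G k M Lk hM hL

end Paper
end
end

section
/- Let θ, β satisfy 0 < θ ≤ β ≤ √θ < 1, M ∈ R^{m×n}, and L ∈ R^{m×m}, R ∈ R^{n×n} symmetric positive definite with M Mᵀ ⪯ 4L and Mᵀ M ⪯ 4R. Then for any p,q > 0 with 1/p + 1/q = 1, ‖L^{−1/(2p)} M R^{−1/(2q)}‖_op ≤ 2. -/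
open Matrix BigOperators

noncomputable section

/-!
The hypotheses say `‖L^{-1/2} M‖ ≤ 2` and `‖M R^{-1/2}‖ ≤ 2`, and the claim interpolates between
them: for positive definite `A`, `B` the function `t ↦ ‖A^{ct} Y B^{c(1-t)}‖` is log-convex
(matrix Cauchy–Schwarz, or Heinz inequality). At a midpoint, `X Xᴴ` is conjugate by a power of `A`
to the product `X₁ X₂ᴴ` of the endpoint matrices; since the norm of a Hermitian matrix is its
spectral radius, `‖X‖² = ‖X Xᴴ‖ ≤ ‖X₁ X₂ᴴ‖ ≤ ‖X₁‖ ‖X₂‖`. Midpoint log-convexity upgrades to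
log-convexity by continuity and density of the dyadic rationals. With `c = -1/2` and `t = 1/p`
this gives `‖L^{-1/(2p)} M R^{-1/(2q)}‖ ≤ 2^{1/p} 2^{1/q} = 2`.
-/

open scoped Matrix.Norms.L2Operator

namespace Matrix

variable {𝕜 ι : Type*} [RCLike 𝕜] [Fintype ι] [DecidableEq ι]

theorem spectralRadius_toEuclideanCLM (A : Matrix ι ι 𝕜) :
    spectralRadius 𝕜 (toEuclideanCLM (n := ι) (𝕜 := 𝕜) A) = spectralRadius 𝕜 A := by
  simp only [spectralRadius, AlgEquiv.spectrum_eq]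

theorem IsHermitian.spectralRadius_eq_l2_opNNNorm {H : Matrix ι ι 𝕜} (hH : H.IsHermitian) :
    spectralRadius 𝕜 H = ‖H‖₊ := by
  rw [cstar_nnnorm_def, ← spectralRadius_toEuclideanCLM]
  exact ContinuousLinearMap.spectralRadius_eq_nnnorm _ (hH.isSelfAdjoint.map _)

theorem spectralRadius_le_l2_opNNNorm (A : Matrix ι ι 𝕜) : spectralRadius 𝕜 A ≤ ‖A‖₊ := by
  rcases isEmpty_or_nonempty ι with hι | hι
  · simp [spectralRadius, spectrum.of_subsingleton]
  · rw [cstar_nnnorm_def, ← spectralRadius_toEuclideanCLM]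
    exact spectrum.spectralRadius_le_nnnorm _

theorem IsHermitian.l2_opNorm_le_of_eq_mul_mul {H A P Q : Matrix ι ι 𝕜} (hH : H.IsHermitian)
    (hPQ : P * Q = 1) (h : H = P * A * Q) : ‖H‖ ≤ ‖A‖ := by
  let u : (Matrix ι ι 𝕜)ˣ := ⟨P, Q, hPQ, mul_eq_one_comm.mp hPQ⟩
  have hu : H = u * A * u⁻¹ := h
  have : spectralRadius 𝕜 H = spectralRadius 𝕜 A := by
    simp only [spectralRadius, hu, spectrum.units_conjugate]
  rw [hH.spectralRadius_eq_l2_opNNNorm] at this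
  exact_mod_cast this.trans_le (spectralRadius_le_l2_opNNNorm A)

theorem IsHermitian.l2_opNorm_eq_norm_eigenvalues {H : Matrix ι ι 𝕜} (hH : H.IsHermitian) :
    ‖H‖ = ‖hH.eigenvalues‖ := by
  calc ‖H‖ = ‖(hH.eigenvectorUnitary : Matrix ι ι 𝕜) * diagonal (RCLike.ofReal ∘ hH.eigenvalues) *
        ↑(star hH.eigenvectorUnitary)‖ := by
        conv_lhs => rw [hH.spectral_theorem]
        rfl
    _ = ‖hH.eigenvalues‖ := by
        rw [CStarRing.norm_mul_coe_unitary, CStarRing.norm_coe_unitary_mul, l2_opNorm_diagonal]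
        simp [Pi.norm_def]

open scoped ComplexOrder

open scoped MatrixOrder in
theorem IsHermitian.eigenvalues_le_of_posSemidef_sub {H : Matrix ι ι 𝕜} (hH : H.IsHermitian)
    {c : ℝ} (h : (c • 1 - H).PosSemidef) (i : ι) : hH.eigenvalues i ≤ c := by
  have hmem : c - hH.eigenvalues i ∈ spectrum ℝ (algebraMap ℝ _ c - H) := by
    rw [← spectrum.singleton_sub_eq]
    exact Set.sub_mem_sub rfl (hH.eigenvalues_mem_spectrum_real i)
  rw [Algebra.algebraMap_eq_smul_one] at hmem
  exact sub_nonneg.mp (spectrum_nonneg_of_nonneg (nonneg_iff_posSemidef.mpr h) hmem)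

theorem l2_opNorm_le_of_posSemidef_sub {m : Type*} [Fintype m] {A : Matrix m ι 𝕜} {c : ℝ}
    (hc : 0 ≤ c) (h : (c ^ 2 • 1 - Aᴴ * A).PosSemidef) : ‖A‖ ≤ c := by
  have hAA := isHermitian_conjTranspose_mul_self A
  refine (mul_self_le_mul_self_iff (norm_nonneg A) hc).mpr ?_
  rw [← l2_opNorm_conjTranspose_mul_self, hAA.l2_opNorm_eq_norm_eigenvalues,
    pi_norm_le_iff_of_nonneg (mul_nonneg hc hc)]
  intro i
  rw [Real.norm_of_nonneg ((posSemidef_conjTranspose_mul_self A).eigenvalues_nonneg i), ← sq]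
  exact hAA.eigenvalues_le_of_posSemidef_sub h i

end Matrix

section

open Set Filter Topology

theorem Icc_subset_of_isClosed_of_add_div_two_mem {S : Set ℝ} (hS : IsClosed S) (h0 : (0 : ℝ) ∈ S)
    (h1 : (1 : ℝ) ∈ S) (hmid : ∀ x ∈ S, ∀ y ∈ S, (x + y) / 2 ∈ S) : Icc 0 1 ⊆ S := by
  have hdyadic : ∀ N k : ℕ, k ≤ 2 ^ N → (k : ℝ) / 2 ^ N ∈ S := by
    intro N
    induction N with
    | zero => intro k hk; interval_cases k <;> simpa
    | succ N ih =>
      intro k hk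
      rw [pow_succ] at hk
      have hk2 : ((k / 2 : ℕ) : ℝ) + ((k + 1) / 2 : ℕ) = k := by
        exact_mod_cast (by omega : k / 2 + (k + 1) / 2 = k)
      convert hmid _ (ih (k / 2) (by omega)) _ (ih ((k + 1) / 2) (by omega)) using 1
      rw [← add_div, hk2, pow_succ, div_div]
  rintro x ⟨hx0, hx1⟩
  have htend : Tendsto (fun N : ℕ => (⌊x * 2 ^ N⌋₊ : ℝ) / 2 ^ N) atTop (𝓝 x) :=
    (tendsto_nat_floor_mul_div_atTop hx0).comp (tendsto_pow_atTop_atTop_of_one_lt one_lt_two)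
  refine hS.mem_of_tendsto htend (Eventually.of_forall fun N => hdyadic N _ ?_)
  exact Nat.floor_le_of_le (by push_cast; nlinarith [pow_pos (two_pos (α := ℝ)) N])

theorem le_rpow_mul_rpow_of_sq_le_mul {φ : ℝ → ℝ} (hφ : Continuous φ) (hφ_nonneg : ∀ x, 0 ≤ φ x)
    (h0 : 0 < φ 0) (h1 : 0 < φ 1) (hmid : ∀ x y, φ ((x + y) / 2) ^ 2 ≤ φ x * φ y)
    {t : ℝ} (ht : t ∈ Icc 0 1) : φ t ≤ φ 0 ^ (1 - t) * φ 1 ^ t := by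
  set g : ℝ → ℝ := fun x => φ 0 ^ (1 - x) * φ 1 ^ x with hg
  have hg_nonneg : ∀ x, 0 ≤ g x := fun x => by positivity
  have hg_mid : ∀ x y, g ((x + y) / 2) ^ 2 = g x * g y := fun x y => by
    simp only [hg, Real.rpow_def_of_pos h0, Real.rpow_def_of_pos h1, ← Real.exp_add, sq]
    congr 1; ring
  have hg_cont : Continuous g := by
    have := Real.continuous_const_rpow h0.ne'
    have := Real.continuous_const_rpow h1.ne'
    fun_prop
  refine Icc_subset_of_isClosed_of_add_div_two_mem (S := {x | φ x ≤ g x}) (isClosed_le hφ hg_cont)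
    (by simp [hg]) (by simp [hg]) (fun x hx y hy => ?_) ht
  refine (sq_le_sq₀ (hφ_nonneg _) (hg_nonneg _)).mp ?_
  calc φ ((x + y) / 2) ^ 2 ≤ φ x * φ y := hmid x y
    _ ≤ g x * g y := mul_le_mul hx hy (hφ_nonneg y) (hg_nonneg x)
    _ = g ((x + y) / 2) ^ 2 := (hg_mid x y).symm

end

namespace Paper

section

variable {k : ℕ} {A : Matrix (Fin k) (Fin k) ℝ}

theorem mrpow_of_isHermitian (hA : A.IsHermitian) (t : ℝ) :
    mrpow A t = Unitary.conjStarAlgAut ℝ _ hA.eigenvectorUnitary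
      (diagonal fun i => hA.eigenvalues i ^ t) := by
  rw [Unitary.conjStarAlgAut_apply]
  exact dif_pos hA

theorem conjTranspose_mrpow (hA : A.IsHermitian) (t : ℝ) : (mrpow A t)ᴴ = mrpow A t := by
  rw [mrpow_of_isHermitian hA, ← star_eq_conjTranspose, ← map_star, star_eq_conjTranspose,
    diagonal_conjTranspose, star_trivial]

theorem mrpow_zero (hA : A.IsHermitian) : mrpow A 0 = 1 := by
  simp [mrpow_of_isHermitian hA]

theorem mrpow_one (hA : A.IsHermitian) : mrpow A 1 = A := by
  conv_rhs => rw [hA.spectral_theorem]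
  simp [mrpow_of_isHermitian hA]

theorem mrpow_mul_mrpow (hA : A.PosDef) (s t : ℝ) : mrpow A s * mrpow A t = mrpow A (s + t) := by
  simp only [mrpow_of_isHermitian hA.isHermitian, ← map_mul, diagonal_mul_diagonal,
    ← Real.rpow_add (hA.eigenvalues_pos _)]

theorem continuous_mrpow (hA : A.PosDef) : Continuous (mrpow A) := by
  have := fun i => Real.continuous_const_rpow (hA.eigenvalues_pos i).ne'
  simp only [funext (mrpow_of_isHermitian hA.isHermitian), Unitary.conjStarAlgAut_apply]
  fun_prop

theorem mrpow_mul_mrpow_mul {l : ℕ} (hA : A.PosDef) (s t : ℝ) (Z : Matrix (Fin k) (Fin l) ℝ) :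
    mrpow A s * (mrpow A t * Z) = mrpow A (s + t) * Z := by
  rw [← Matrix.mul_assoc, mrpow_mul_mrpow hA]

end

variable {m n : ℕ} {A : Matrix (Fin m) (Fin m) ℝ} {B : Matrix (Fin n) (Fin n) ℝ}

theorem sq_l2_opNorm_mrpow_mul_mul_mrpow_midpoint_le (hA : A.PosDef) (hB : B.PosDef)
    (Y : Matrix (Fin m) (Fin n) ℝ) (s s' t t' : ℝ) :
    ‖mrpow A ((s + s') / 2) * Y * mrpow B ((t + t') / 2)‖ ^ 2 ≤
      ‖mrpow A s * Y * mrpow B t‖ * ‖mrpow A s' * Y * mrpow B t'‖ := by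
  set X := mrpow A ((s + s') / 2) * Y * mrpow B ((t + t') / 2)
  have hconj : X * Xᴴ = mrpow A ((s' - s) / 2) *
      ((mrpow A s * Y * mrpow B t) * (mrpow A s' * Y * mrpow B t')ᴴ) * mrpow A ((s - s') / 2) := by
    simp only [X, conjTranspose_mul, conjTranspose_mrpow hA.isHermitian,
      conjTranspose_mrpow hB.isHermitian, Matrix.mul_assoc, mrpow_mul_mrpow_mul hA,
      mrpow_mul_mrpow_mul hB, mrpow_mul_mrpow hA]
    ring_nf
  have hinv : mrpow A ((s' - s) / 2) * mrpow A ((s - s') / 2) = 1 := by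
    rw [mrpow_mul_mrpow hA, ← mrpow_zero hA.isHermitian]
    ring_nf
  calc ‖X‖ ^ 2 = ‖X * Xᴴ‖ := by
        rw [sq, ← l2_opNorm_conjTranspose X, ← l2_opNorm_conjTranspose_mul_self,
          conjTranspose_conjTranspose]
    _ ≤ ‖(mrpow A s * Y * mrpow B t) * (mrpow A s' * Y * mrpow B t')ᴴ‖ :=
        (isHermitian_mul_conjTranspose_self X).l2_opNorm_le_of_eq_mul_mul hinv hconj
    _ ≤ _ := by
        grw [l2_opNorm_mul, l2_opNorm_conjTranspose]

theorem l2_opNorm_mrpow_mul_mul_mrpow_le (hA : A.PosDef) (hB : B.PosDef)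
    (Y : Matrix (Fin m) (Fin n) ℝ) (c : ℝ) {t : ℝ} (ht : t ∈ Set.Icc 0 1) :
    ‖mrpow A (c * t) * Y * mrpow B (c * (1 - t))‖ ≤
      ‖mrpow A c * Y‖ ^ t * ‖Y * mrpow B c‖ ^ (1 - t) := by
  rcases eq_or_ne Y 0 with rfl | hY
  · simp only [Matrix.mul_zero, Matrix.zero_mul, norm_zero]
    positivity
  set φ : ℝ → ℝ := fun x => ‖mrpow A (c * x) * Y * mrpow B (c * (1 - x))‖
  have hφ0 : φ 0 = ‖Y * mrpow B c‖ := by simp [φ, mrpow_zero hA.isHermitian]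
  have hφ1 : φ 1 = ‖mrpow A c * Y‖ := by simp [φ, mrpow_zero hB.isHermitian]
  have hAY : mrpow A (-c) * (mrpow A c * Y) = Y := by
    rw [mrpow_mul_mrpow_mul hA, neg_add_cancel, mrpow_zero hA.isHermitian, Matrix.one_mul]
  have hYB : Y * mrpow B c * mrpow B (-c) = Y := by
    rw [Matrix.mul_assoc, mrpow_mul_mrpow hB, add_neg_cancel, mrpow_zero hB.isHermitian,
      Matrix.mul_one]
  have hφ0_pos : 0 < φ 0 := hφ0 ▸ norm_pos_iff.mpr fun h => hY (by rw [← hYB, h, Matrix.zero_mul])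
  have hφ1_pos : 0 < φ 1 := hφ1 ▸ norm_pos_iff.mpr fun h => hY (by rw [← hAY, h, Matrix.mul_zero])
  have hφ : Continuous φ := by
    have := continuous_mrpow hA
    have := continuous_mrpow hB
    fun_prop
  have hmid : ∀ x y, φ ((x + y) / 2) ^ 2 ≤ φ x * φ y := fun x y => by
    simp only [φ, show c * ((x + y) / 2) = (c * x + c * y) / 2 by ring,
      show c * (1 - (x + y) / 2) = (c * (1 - x) + c * (1 - y)) / 2 by ring]
    exact sq_l2_opNorm_mrpow_mul_mul_mrpow_midpoint_le hA hB Y _ _ _ _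
  have := le_rpow_mul_rpow_of_sq_le_mul hφ (fun _ => norm_nonneg _) hφ0_pos hφ1_pos hmid ht
  rwa [hφ0, hφ1, mul_comm] at this

theorem l2_opNorm_mrpow_neg_half_mul_le {L : Matrix (Fin m) (Fin m) ℝ} (hL : L.PosDef)
    (M : Matrix (Fin m) (Fin n) ℝ) {c : ℝ} (hc : 0 ≤ c) (h : (c ^ 2 • L - M * Mᴴ).PosSemidef) :
    ‖mrpow L (-(1 / 2)) * M‖ ≤ c := by
  set S := mrpow L (-(1 / 2))
  have hSLS : S * (L * S) = 1 := by
    conv_lhs => rw [← mrpow_one hL.isHermitian]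
    rw [mrpow_mul_mrpow hL, mrpow_mul_mrpow hL, ← mrpow_zero hL.isHermitian]
    norm_num
  have hS : Sᴴ = S := conjTranspose_mrpow hL.isHermitian _
  have hconj : c ^ 2 • 1 - (S * M)ᴴᴴ * (S * M)ᴴ = S * (c ^ 2 • L - M * Mᴴ) * Sᴴ := by
    simp only [conjTranspose_conjTranspose, conjTranspose_mul, hS, Matrix.mul_sub, Matrix.sub_mul,
      Matrix.mul_smul, Matrix.smul_mul, Matrix.mul_assoc, hSLS]
  rw [← l2_opNorm_conjTranspose]
  exact l2_opNorm_le_of_posSemidef_sub hc (hconj ▸ h.mul_mul_conjTranspose_same S)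

theorem l2_opNorm_mul_mrpow_neg_half_le {R : Matrix (Fin n) (Fin n) ℝ} (hR : R.PosDef)
    (M : Matrix (Fin m) (Fin n) ℝ) {c : ℝ} (hc : 0 ≤ c) (h : (c ^ 2 • R - Mᴴ * M).PosSemidef) :
    ‖M * mrpow R (-(1 / 2))‖ ≤ c := by
  rw [← l2_opNorm_conjTranspose, conjTranspose_mul, conjTranspose_mrpow hR.isHermitian]
  exact l2_opNorm_mrpow_neg_half_mul_le hR Mᴴ hc (by rwa [conjTranspose_conjTranspose])

theorem opNorm_eq_l2_opNorm (Y : Matrix (Fin m) (Fin n) ℝ) : opNorm Y = ‖Y‖ := by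
  have hYY := isHermitian_conjTranspose_mul_self Y
  have hev : ∀ i, 0 ≤ hYY.eigenvalues i := (posSemidef_conjTranspose_mul_self Y).eigenvalues_nonneg
  have hnorm : ‖Y‖ = √‖hYY.eigenvalues‖ := by
    rw [← hYY.l2_opNorm_eq_norm_eigenvalues, l2_opNorm_conjTranspose_mul_self,
      Real.sqrt_mul_self (norm_nonneg Y)]
  have hop : 0 ≤ opNorm Y := Real.iSup_nonneg fun i => Real.sqrt_nonneg _
  rw [hnorm]
  refine le_antisymm (Real.iSup_le (fun i => Real.sqrt_le_sqrt ?_) (Real.sqrt_nonneg _)) ?_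
  · exact (le_abs_self _).trans (norm_le_pi_norm hYY.eigenvalues i)
  · refine Real.sqrt_le_iff.mpr ⟨hop, (pi_norm_le_iff_of_nonneg (sq_nonneg _)).mpr fun i => ?_⟩
    rw [Real.norm_of_nonneg (hev i), ← Real.sq_sqrt (hev i)]
    exact pow_le_pow_left₀ (Real.sqrt_nonneg _)
      (le_ciSup (f := singVals Y) (Set.finite_range _).bddAbove i) 2

theorem stmt10_general {m n : ℕ}
    (M : Matrix (Fin m) (Fin n) ℝ)
    {L : Matrix (Fin m) (Fin m) ℝ} {R : Matrix (Fin n) (Fin n) ℝ}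
    (hL : L.PosDef) (hR : R.PosDef)
    (hML : ((4 : ℝ) • L - M * Mᴴ).PosSemidef)
    (hMR : ((4 : ℝ) • R - Mᴴ * M).PosSemidef)
    {p q : ℝ} (hp : 0 < p) (hq : 0 < q) (hpq : 1 / p + 1 / q = 1) :
    opNorm (mrpow L (-(1 / (2 * p))) * M * mrpow R (-(1 / (2 * q)))) ≤ 2 := by
  have ht : 1 / p ∈ Set.Icc (0 : ℝ) 1 := ⟨by positivity, by linarith [one_div_pos.mpr hq]⟩
  have hexpL : -(1 / (2 * p)) = -(1 / 2) * (1 / p) := by ring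
  have hexpR : -(1 / (2 * q)) = -(1 / 2) * (1 - 1 / p) := by
    rw [show 1 - 1 / p = 1 / q by linarith]; ring
  have hLM : ‖mrpow L (-(1 / 2)) * M‖ ≤ 2 :=
    l2_opNorm_mrpow_neg_half_mul_le hL M zero_le_two (by rwa [show (2 : ℝ) ^ 2 = 4 by norm_num])
  have hMR' : ‖M * mrpow R (-(1 / 2))‖ ≤ 2 :=
    l2_opNorm_mul_mrpow_neg_half_le hR M zero_le_two (by rwa [show (2 : ℝ) ^ 2 = 4 by norm_num])
  rw [opNorm_eq_l2_opNorm, hexpL, hexpR]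
  calc _ ≤ ‖mrpow L (-(1 / 2)) * M‖ ^ (1 / p) * ‖M * mrpow R (-(1 / 2))‖ ^ (1 - 1 / p) :=
        l2_opNorm_mrpow_mul_mul_mrpow_le hL hR M _ ht
    _ ≤ 2 ^ (1 / p) * 2 ^ (1 - 1 / p) := by
        gcongr
        linarith [ht.2]
    _ = 2 := by rw [← Real.rpow_add two_pos]; norm_num

/-- Spectral norm bound on the two-sided preconditioned update:
`‖L^{−1/(2p)} M R^{−1/(2q)}‖_op ≤ 2`. -/
theorem stmt10 {m n : ℕ} {θ β : ℝ} (hθ : 0 < θ) (hθβ : θ ≤ β)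
    (hβ : β ≤ Real.sqrt θ) (hβ1 : Real.sqrt θ < 1)
    (M : Matrix (Fin m) (Fin n) ℝ)
    {L : Matrix (Fin m) (Fin m) ℝ} {R : Matrix (Fin n) (Fin n) ℝ}
    (hL : L.PosDef) (hR : R.PosDef)
    (hML : ((4 : ℝ) • L - M * Mᴴ).PosSemidef)
    (hMR : ((4 : ℝ) • R - Mᴴ * M).PosSemidef)
    {p q : ℝ} (hp : 0 < p) (hq : 0 < q) (hpq : 1 / p + 1 / q = 1) :
    opNorm (mrpow L (-(1 / (2 * p))) * M * mrpow R (-(1 / (2 * q)))) ≤ 2 :=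
  stmt10_general M hL hR hML hMR hp hq hpq

end Paper
end
end
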